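/- Let Ĥ = H ⊕ H with complex structure J, and let W ⊆ Ĥ be a cofinite isotropic subspace (JW ⊆ W⊥, with the reduced space H_W := (W ⊕ JW)⊥ finite dimensional). Let L be a lagrangian with L ∩ W = {0} and L + W closed. Then ℓ := P_{H_W}(L ∩ W^ω) is a lagrangian subspace of H_W, where W^ω := (JW)⊥ is the annihilator of W. Moreover the projection P_{H_W} restricted to L ∩ W^ω is injective with kernel computation Ker(P_{H_W}|_{L∩W^ω}) = L ∩ W = {0}. -/

import Mathlib

noncomputable section

variable (H : Type) [NormedAddCommGroup H] [InnerProductSpace ℂ H] [CompleteSpace H]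

/-- `Ĥ = H ⊕ H` with the Hilbert (l²) structure. -/
abbrev Hh := WithLp 2 (H × H)

/-- The complex structure `J(x,y) = (y, -x)` on `Ĥ = H ⊕ H`. -/
def hatJ : Hh H →L[ℂ] Hh H :=
  (WithLp.prodContinuousLinearEquiv 2 ℂ H H).symm.toContinuousLinearMap ∘L
    ((ContinuousLinearMap.snd ℂ H H).prod (-(ContinuousLinearMap.fst ℂ H H))) ∘L
    (WithLp.prodContinuousLinearEquiv 2 ℂ H H).toContinuousLinearMap

/-- A subspace `L ⊆ Ĥ` is lagrangian if `JL = L⊥`. -/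
def IsLagrangian (L : Submodule ℂ (Hh H)) : Prop :=
  L.map (hatJ H).toLinearMap = Lᗮ

/-- The annihilator `W^ω = (JW)⊥` of an isotropic subspace `W`. -/
def annihilator (W : Submodule ℂ (Hh H)) : Submodule ℂ (Hh H) :=
  (W.map (hatJ H).toLinearMap)ᗮ

/-- The symplectically reduced space `H_W = (W ⊕ JW)⊥`. -/
def reducedSpace (W : Submodule ℂ (Hh H)) : Submodule ℂ (Hh H) :=
  (W ⊔ W.map (hatJ H).toLinearMap)ᗮ

/-- The orthogonal projection of `Ĥ` onto `H_W`, viewed inside `Ĥ`. -/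
def reducedProj (W : Submodule ℂ (Hh H)) [Submodule.HasOrthogonalProjection (reducedSpace H W)] :
    Hh H →L[ℂ] Hh H :=
  (reducedSpace H W).subtypeL ∘L Submodule.orthogonalProjectionOnto (reducedSpace H W)

/-- The `∓i` eigenspaces `Ker (J ± i)` of `J`. -/
def eigenspace (s : ℂ) : Submodule ℂ (Hh H) :=
  LinearMap.ker ((hatJ H).toLinearMap + s • (LinearMap.id : Hh H →ₗ[ℂ] Hh H))

/-!
On `W^ω` the projection `P` onto `H_W = W⊥ ∩ W^ω` differs from the identity by an element of `W`,
and the form `⟪·, J ·⟫` on `W^ω` is invariant under translation by `W`; hence `P` kills exactly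
`L ∩ W` and `ℓ` inherits isotropy from `L`. For maximality, a vector `z ∈ H_W` orthogonal to `ℓ` is
orthogonal to `L ∩ W^ω`, whose image under `J` contains `(L + W)⊥ = JL ∩ W⊥`. As `L + W` is closed,
`Jz ∈ L + W`, and writing `Jz = v + w` exhibits `Jz = P v` with `v ∈ L ∩ W^ω`.
-/

open scoped InnerProductSpace

variable {H}

section ComplexStructure

omit [CompleteSpace H]

lemma hatJ_hatJ (x : Hh H) : hatJ H (hatJ H x) = -x := by
  rw [WithLp.ext_iff]; ext <;> simp [hatJ]

lemma inner_hatJ_hatJ (x y : Hh H) : ⟪hatJ H x, hatJ H y⟫_ℂ = ⟪x, y⟫_ℂ := by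
  simp [hatJ, WithLp.prod_inner_apply, add_comm]

lemma inner_hatJ_left (x y : Hh H) : ⟪hatJ H x, y⟫_ℂ = -⟪x, hatJ H y⟫_ℂ := by
  rw [← inner_hatJ_hatJ x (hatJ H y), hatJ_hatJ, inner_neg_right, neg_neg]

variable {W L : Submodule ℂ (Hh H)} {x y : Hh H}

lemma IsLagrangian.inner_hatJ_eq_zero (hL : IsLagrangian H L) (hx : x ∈ L) (hy : y ∈ L) :
    ⟪y, hatJ H x⟫_ℂ = 0 :=
  Submodule.inner_right_of_mem_orthogonal hy (hL ▸ Submodule.mem_map_of_mem hx)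

lemma mem_annihilator_iff : x ∈ annihilator H W ↔ ∀ w ∈ W, ⟪hatJ H w, x⟫_ℂ = 0 := by
  simp [annihilator, Submodule.mem_orthogonal]

lemma hatJ_mem_orthogonal_iff : hatJ H x ∈ Wᗮ ↔ x ∈ annihilator H W := by
  rw [mem_annihilator_iff, Submodule.mem_orthogonal]
  refine forall₂_congr fun w _ => ?_
  rw [inner_hatJ_left, neg_eq_zero]

lemma hatJ_mem_annihilator_iff : hatJ H x ∈ annihilator H W ↔ x ∈ Wᗮ := by
  rw [mem_annihilator_iff, Submodule.mem_orthogonal]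
  exact forall₂_congr fun w _ => by rw [inner_hatJ_hatJ]

lemma le_annihilator (hiso : W.map (hatJ H).toLinearMap ≤ Wᗮ) : W ≤ annihilator H W :=
  W.le_orthogonal_orthogonal.trans (Submodule.orthogonal_le hiso)

lemma reducedSpace_eq_inf : reducedSpace H W = Wᗮ ⊓ annihilator H W :=
  (Submodule.inf_orthogonal _ _).symm

lemma le_orthogonal_reducedSpace : W ≤ (reducedSpace H W)ᗮ :=
  le_sup_left.trans (Submodule.le_orthogonal_orthogonal _)

lemma reducedSpace_le_annihilator : reducedSpace H W ≤ annihilator H W :=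
  reducedSpace_eq_inf.trans_le inf_le_right

lemma hatJ_mem_reducedSpace (hx : x ∈ reducedSpace H W) : hatJ H x ∈ reducedSpace H W := by
  rw [reducedSpace_eq_inf] at hx ⊢
  exact ⟨hatJ_mem_orthogonal_iff.mpr hx.2, hatJ_mem_annihilator_iff.mpr hx.1⟩

lemma inner_sub_hatJ_sub (hiso : W.map (hatJ H).toLinearMap ≤ Wᗮ) (hx : x ∈ annihilator H W)
    (hy : y ∈ annihilator H W) {a b : Hh H} (ha : a ∈ W) (hb : b ∈ W) :
    ⟪y - b, hatJ H (x - a)⟫_ℂ = ⟪y, hatJ H x⟫_ℂ := by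
  have hJa : hatJ H a ∈ W.map (hatJ H).toLinearMap := Submodule.mem_map_of_mem ha
  have hJb : hatJ H b ∈ W.map (hatJ H).toLinearMap := Submodule.mem_map_of_mem hb
  have hya : ⟪y, hatJ H a⟫_ℂ = 0 := Submodule.inner_left_of_mem_orthogonal hJa hy
  have hbx : ⟪b, hatJ H x⟫_ℂ = 0 := by
    rw [← neg_eq_zero, ← inner_hatJ_left]
    exact Submodule.inner_right_of_mem_orthogonal hJb hx
  have hba : ⟪b, hatJ H a⟫_ℂ = 0 := Submodule.inner_right_of_mem_orthogonal hb (hiso hJa)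
  simp only [map_sub, inner_sub_left, inner_sub_right, hya, hbx, hba, sub_zero]

lemma orthogonal_sup_le_map_hatJ (hL : IsLagrangian H L) :
    (L ⊔ W)ᗮ ≤ (L ⊓ annihilator H W).map (hatJ H).toLinearMap := by
  rw [← Submodule.inf_orthogonal, ← hL]
  rintro _ ⟨⟨v, hv, rfl⟩, hJv⟩
  exact ⟨v, ⟨hv, hatJ_mem_orthogonal_iff.mp hJv⟩, rfl⟩

end ComplexStructure

section Projection

variable {W L : Submodule ℂ (Hh H)} [(reducedSpace H W).HasOrthogonalProjection] {x y : Hh H}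

omit [CompleteSpace H]

lemma reducedProj_mem (x : Hh H) : reducedProj H W x ∈ reducedSpace H W :=
  Submodule.starProjection_apply_mem _ x

lemma reducedProj_eq_self (hx : x ∈ reducedSpace H W) : reducedProj H W x = x :=
  Submodule.starProjection_eq_self_iff.mpr hx

lemma reducedProj_eq_zero_of_mem (hx : x ∈ W) : reducedProj H W x = 0 :=
  (Submodule.starProjection_apply_eq_zero_iff _).mpr (le_orthogonal_reducedSpace hx)

lemma inner_reducedProj_left (x : Hh H) (hy : y ∈ reducedSpace H W) :
    ⟪reducedProj H W x, y⟫_ℂ = ⟪x, y⟫_ℂ := by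
  rw [reducedProj, ← Submodule.starProjection, Submodule.inner_starProjection_left_eq_right,
    Submodule.starProjection_eq_self_iff.mpr hy]

lemma reducedProj_eq_sub_starProjection [W.HasOrthogonalProjection]
    (hiso : W.map (hatJ H).toLinearMap ≤ Wᗮ) (hx : x ∈ annihilator H W) :
    reducedProj H W x = x - W.starProjection x := by
  have hxw : x - W.starProjection x ∈ reducedSpace H W := by
    rw [reducedSpace_eq_inf]
    exact ⟨W.sub_starProjection_mem_orthogonal x,
      sub_mem hx (le_annihilator hiso (W.starProjection_apply_mem x))⟩
  refine Submodule.eq_starProjection_of_mem_orthogonal hxw ?_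
  rw [sub_sub_cancel]
  exact le_orthogonal_reducedSpace (W.starProjection_apply_mem x)

lemma sub_reducedProj_mem [W.HasOrthogonalProjection]
    (hiso : W.map (hatJ H).toLinearMap ≤ Wᗮ) (hx : x ∈ annihilator H W) :
    x - reducedProj H W x ∈ W := by
  rw [reducedProj_eq_sub_starProjection hiso hx, sub_sub_cancel]
  exact W.starProjection_apply_mem x

lemma reducedProj_eq_zero_iff [W.HasOrthogonalProjection]
    (hiso : W.map (hatJ H).toLinearMap ≤ Wᗮ) (hx : x ∈ annihilator H W) :
    reducedProj H W x = 0 ↔ x ∈ W :=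
  ⟨fun h => by simpa [h] using sub_reducedProj_mem hiso hx, reducedProj_eq_zero_of_mem⟩

lemma inner_reducedProj_hatJ_reducedProj [W.HasOrthogonalProjection]
    (hiso : W.map (hatJ H).toLinearMap ≤ Wᗮ) (hx : x ∈ annihilator H W)
    (hy : y ∈ annihilator H W) :
    ⟪reducedProj H W y, hatJ H (reducedProj H W x)⟫_ℂ = ⟪y, hatJ H x⟫_ℂ := by
  simpa only [sub_sub_cancel] using inner_sub_hatJ_sub hiso hx hy
    (sub_reducedProj_mem hiso hx) (sub_reducedProj_mem hiso hy)

variable (W L) in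
def lagrangianReduction : Submodule ℂ (Hh H) :=
  (L ⊓ annihilator H W).map (reducedProj H W).toLinearMap

lemma mem_lagrangianReduction_of_mem_sup (hiso : W.map (hatJ H).toLinearMap ≤ Wᗮ)
    (hy : y ∈ reducedSpace H W) (hyLW : y ∈ L ⊔ W) : y ∈ lagrangianReduction W L := by
  obtain ⟨v, hv, w, hw, rfl⟩ := Submodule.mem_sup.mp hyLW
  have hvA : v ∈ annihilator H W := by
    simpa using sub_mem (reducedSpace_le_annihilator hy) (le_annihilator hiso hw)
  refine ⟨v, ⟨hv, hvA⟩, ?_⟩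
  simpa [reducedProj_eq_zero_of_mem hw] using reducedProj_eq_self hy

lemma map_hatJ_lagrangianReduction_le [W.HasOrthogonalProjection]
    (hiso : W.map (hatJ H).toLinearMap ≤ Wᗮ) (hL : IsLagrangian H L) :
    (lagrangianReduction W L).map (hatJ H).toLinearMap ≤
      (lagrangianReduction W L)ᗮ ⊓ reducedSpace H W := by
  rintro _ ⟨_, ⟨x, ⟨hxL, hxA⟩, rfl⟩, rfl⟩
  refine ⟨?_, hatJ_mem_reducedSpace (reducedProj_mem x)⟩
  rintro _ ⟨y, ⟨hyL, hyA⟩, rfl⟩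
  simp only [ContinuousLinearMap.coe_coe]
  rw [inner_reducedProj_hatJ_reducedProj hiso hxA hyA]
  exact hL.inner_hatJ_eq_zero hxL hyL

lemma orthogonal_lagrangianReduction_le_map_hatJ [(L ⊔ W).HasOrthogonalProjection]
    (hiso : W.map (hatJ H).toLinearMap ≤ Wᗮ) (hL : IsLagrangian H L) :
    (lagrangianReduction W L)ᗮ ⊓ reducedSpace H W ≤
      (lagrangianReduction W L).map (hatJ H).toLinearMap := by
  rintro z ⟨hzℓ, hz⟩
  have hz_perp : z ∈ (L ⊓ annihilator H W)ᗮ := fun v hv => by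
    rw [← inner_reducedProj_left v hz]
    exact hzℓ _ ⟨v, hv, rfl⟩
  have hJz : hatJ H z ∈ L ⊔ W := by
    rw [← Submodule.orthogonal_orthogonal (L ⊔ W)]
    intro u hu
    obtain ⟨v, hv, rfl⟩ := orthogonal_sup_le_map_hatJ hL hu
    rw [ContinuousLinearMap.coe_coe, inner_hatJ_hatJ]
    exact hz_perp v hv
  refine ⟨-hatJ H z, neg_mem ?_, by simp [hatJ_hatJ]⟩
  exact mem_lagrangianReduction_of_mem_sup hiso (hatJ_mem_reducedSpace hz) hJz

end Projection

theorem symplectic_reduction_lagrangian_general (W : Submodule ℂ (Hh H))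
    (hisoc : IsClosed (W : Set (Hh H)))
    (hiso : W.map (hatJ H).toLinearMap ≤ Wᗮ)
    [Submodule.HasOrthogonalProjection (reducedSpace H W)]
    (L : Submodule ℂ (Hh H)) (hL : IsLagrangian H L)
    (hint : L ⊓ W = ⊥) (hclosed : IsClosed ((L ⊔ W : Submodule ℂ (Hh H)) : Set (Hh H))) :
    (∀ x ∈ L ⊓ annihilator H W, (reducedProj H W x = 0 ↔ x ∈ L ⊓ W)) ∧
    (∀ x ∈ L ⊓ annihilator H W, reducedProj H W x = 0 → x = 0) ∧
    (((L ⊓ annihilator H W).map (reducedProj H W).toLinearMap).map (hatJ H).toLinearMap =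
      ((L ⊓ annihilator H W).map (reducedProj H W).toLinearMap)ᗮ ⊓ reducedSpace H W) := by
  have : CompleteSpace W := hisoc.completeSpace_coe
  have : CompleteSpace ↥(L ⊔ W) := hclosed.completeSpace_coe
  have hker : ∀ x ∈ L ⊓ annihilator H W, (reducedProj H W x = 0 ↔ x ∈ L ⊓ W) := fun x hx =>
    (reducedProj_eq_zero_iff hiso hx.2).trans (and_iff_right hx.1).symm
  refine ⟨hker, fun x hx h0 => by simpa [hint] using (hker x hx).mp h0, ?_⟩
  exact le_antisymm (map_hatJ_lagrangianReduction_le hiso hL)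
    (orthogonal_lagrangianReduction_le_map_hatJ hiso hL)

/-- let `W` be a cofinite isotropic subspace of `Ĥ` and `L` a lagrangian
with `L ∩ W = 0` and `L + W` closed. Then `P_{H_W}|_{L ∩ W^ω}` is injective with kernel
`L ∩ W = {0}`, and `ℓ := P_{H_W}(L ∩ W^ω)` is a lagrangian subspace of `H_W`. -/
theorem symplectic_reduction_lagrangian (W : Submodule ℂ (Hh H))
    (hisoc : IsClosed (W : Set (Hh H)))
    (hiso : W.map (hatJ H).toLinearMap ≤ Wᗮ)
    [FiniteDimensional ℂ ↥(reducedSpace H W)]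
    [Submodule.HasOrthogonalProjection (reducedSpace H W)]
    (hsigP : 2 * Module.finrank ℂ ↥(eigenspace H Complex.I ⊓ reducedSpace H W) =
      Module.finrank ℂ ↥(reducedSpace H W))
    (hsigM : 2 * Module.finrank ℂ ↥(eigenspace H (-Complex.I) ⊓ reducedSpace H W) =
      Module.finrank ℂ ↥(reducedSpace H W))
    (L : Submodule ℂ (Hh H)) (hL : IsLagrangian H L)
    (hint : L ⊓ W = ⊥) (hclosed : IsClosed ((L ⊔ W : Submodule ℂ (Hh H)) : Set (Hh H))) :
    (∀ x ∈ L ⊓ annihilator H W, (reducedProj H W x = 0 ↔ x ∈ L ⊓ W)) ∧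
    (∀ x ∈ L ⊓ annihilator H W, reducedProj H W x = 0 → x = 0) ∧
    (((L ⊓ annihilator H W).map (reducedProj H W).toLinearMap).map (hatJ H).toLinearMap =
      ((L ⊓ annihilator H W).map (reducedProj H W).toLinearMap)ᗮ ⊓ reducedSpace H W) :=
  symplectic_reduction_lagrangian_general W hisoc hiso L hL hint hclosed
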